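/- Let R be an associative ring with ℤ-basis {t_w}_{w∈W} (W a finite set with involution w ↦ w⁻¹) and non-negative integer structure constants γ_{x,y,z} given by t_x t_y = Σ_z γ_{x,y,z⁻¹} t_z. Let d be a basis element with t_d t_d = t_d which is a left identity for t_y (t_d t_y = t_y) and a right identity for t_{y⁻¹} (t_{y⁻¹} t_d = t_{y⁻¹}). If t_{y⁻¹} t_y = t_{d'} for some idempotent basis element t_{d'} which is a right identity for t_y and left identity for t_{y⁻¹}, then t_y t_{y⁻¹} = t_d. -/

import Mathlib

/-!
`t_y t_{y⁻¹}` is idempotent, since `t_{y⁻¹} t_y = t_{d'}` and `t_{d'}` is a left identity for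
`t_{y⁻¹}`. Expanding `(t_d + x)² = t_d + x` with `t_d` idempotent and absorbing `x` gives
`x + x² = 0`. Non-negative structure constants make `x²` a non-negative combination as well, and
a sum of two non-negative combinations vanishes only if both do, so `x = 0`.
-/

theorem IsIdempotentElem.mul_of_mul_eq {S : Type*} [Semigroup S] {a c e : S}
    (hca : c * a = e) (hec : e * c = c) : IsIdempotentElem (a * c) := by
  rw [IsIdempotentElem, mul_assoc, ← mul_assoc c, hca, hec]

theorem add_mul_self_eq_zero_of_isIdempotentElem_add {R : Type*} [NonUnitalNonAssocRing R]
    {e x : R} (he : IsIdempotentElem e) (hex : e * x = x) (hxe : x * e = x)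
    (hexx : IsIdempotentElem (e + x)) : x + x * x = 0 := by
  have h := hexx.eq
  rw [mul_add, add_mul, add_mul, he.eq, hex, hxe, add_assoc] at h
  simpa only [add_right_inj, add_eq_left] using h

namespace Module.Basis

theorem repr_mul_nonneg {k R I : Type*} [CommRing k] [PartialOrder k] [IsOrderedRing k]
    [NonUnitalNonAssocSemiring R] [Module k R] [IsScalarTower k R R] [SMulCommClass k R R]
    (b : Basis I k R) (hpos : ∀ u v w : I, 0 ≤ b.repr (b u * b v) w)
    {a c : R} (ha : ∀ w, 0 ≤ b.repr a w) (hc : ∀ w, 0 ≤ b.repr c w) (w : I) :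
    0 ≤ b.repr (a * c) w := by
  rw [← LinearMap.mul_apply' (R := k), ← LinearMap.sum_repr_mul_repr_mul b b]
  simp only [map_finsuppSum, map_smul, Finsupp.sum_apply, LinearMap.mul_apply',
    Finsupp.smul_apply, smul_eq_mul]
  exact Finset.sum_nonneg fun u _ => Finset.sum_nonneg fun v _ =>
    mul_nonneg (ha u) (mul_nonneg (hc v) (hpos u v w))

theorem eq_zero_of_add_eq_zero_of_repr_nonneg {k M I : Type*} [Ring k] [PartialOrder k]
    [IsOrderedRing k] [AddCommGroup M] [Module k M] (b : Basis I k M) {a c : M}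
    (ha : ∀ w, 0 ≤ b.repr a w) (hc : ∀ w, 0 ≤ b.repr c w) (hac : a + c = 0) : a = 0 := by
  refine b.repr.injective (Finsupp.ext fun w => ?_)
  have hw : b.repr a w + b.repr c w = 0 := by simpa using congr(b.repr $hac w)
  simpa using ((add_eq_zero_iff_of_nonneg (ha w) (hc w)).mp hw).1

end Module.Basis

theorem stmt_11_general {R I : Type*} [NonUnitalRing R] (b : Module.Basis I ℤ R)
    (hpos : ∀ u v w : I, 0 ≤ b.repr (b u * b v) w)
    (y yi d d' : I)
    (hdd : b d * b d = b d)
    (hyy : b yi * b y = b d')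
    (hd'yi : b d' * b yi = b yi)
    (x : R) (hyx : b y * b yi = b d + x)
    (hx : ∀ w : I, 0 ≤ b.repr x w)
    (h1 : b d * x = x) (h2 : x * b d = x) :
    b y * b yi = b d := by
  have hidem : IsIdempotentElem (b d + x) := hyx ▸ .mul_of_mul_eq hyy hd'yi
  have hxx : x + x * x = 0 := add_mul_self_eq_zero_of_isIdempotentElem_add hdd h1 h2 hidem
  have hx0 : x = 0 :=
    b.eq_zero_of_add_eq_zero_of_repr_nonneg hx (b.repr_mul_nonneg hpos hx hx) hxx
  rw [hyx, hx0, add_zero]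

/-- Abstracting the asymptotic ring of a finite Weyl group: a ring free
on a basis with non-negative integer structure constants, with `t d`
idempotent, a left identity for `t y` and right identity for `t yi`
(`yi = y⁻¹`), and `t yi * t y = t d'` an idempotent basis element which
is a right identity for `t y` and a left identity for `t yi`.  If
moreover `t y * t yi = t d + x` with `x` a non-negative combination
satisfying `t d * x = x * t d = x`, then `t y * t yi = t d`. -/
theorem stmt_11 {R I : Type*} [NonUnitalRing R] (b : Module.Basis I ℤ R)
    (hpos : ∀ u v w : I, 0 ≤ b.repr (b u * b v) w)
    (y yi d d' : I)
    (hdd : b d * b d = b d)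
    (hdy : b d * b y = b y) (hyid : b yi * b d = b yi)
    (hyy : b yi * b y = b d')
    (hd'd' : b d' * b d' = b d')
    (hyd' : b y * b d' = b y) (hd'yi : b d' * b yi = b yi)
    (x : R) (hyx : b y * b yi = b d + x)
    (hx : ∀ w : I, 0 ≤ b.repr x w)
    (h1 : b d * x = x) (h2 : x * b d = x) :
    b y * b yi = b d :=
  stmt_11_general b hpos y yi d d' hdd hyy hd'yi x hyx hx h1 h2
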